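/- arXiv:2410.12815 — 2 statements merged into one kernel-verified Lean document; each statement's English description precedes it below -/
import Mathlib

section
/- For every real number α with 0 < α < 1, the series ∑_{j=1}^{∞} (1/(2j)) · C(2j, j) · (α/2)^{2j} converges and its sum equals −log((1 + √(1 − α²))/2), i.e. equals log 2 − log(1 + √(1 − α²)). Here C(2j, j) denotes the central binomial coefficient. -/
/-!
The numbers `C(2n, n) / 4ⁿ` are the coefficients of the binomial series of `(1 - x)^(-1/2)`.
Differentiating termwise, `F(x) = ∑ C(2n, n) / 4ⁿ · xⁿ / (2n)` has derivative
`((1 - x)^(-1/2) - 1) / (2x) = 1 / (2s(1 + s))` with `s = √(1 - x)`, which is also the derivative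
of `-log((1 + s) / 2)`. Both functions vanish at `0`, so they agree on `(-1, 1)`; the theorem is the
case `x = α²`.
-/

open Real
open scoped Nat

theorem ascPochhammer_eval_half (n : ℕ) :
    (ascPochhammer ℝ n).eval (1 / 2) = n ! * Nat.centralBinom n / 4 ^ n := by
  induction n with
  | zero => simp
  | succ n ih =>
    have h : ((n : ℝ) + 1) * (n + 1).centralBinom = 2 * (2 * n + 1) * n.centralBinom := by
      exact_mod_cast Nat.succ_mul_centralBinom_succ n
    rw [ascPochhammer_succ_eval, ih, Nat.factorial_succ, pow_succ]
    push_cast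
    linear_combination (-(n ! : ℝ) / (4 ^ n * 4)) * h

-- The coefficient of `xⁿ` in `Real.one_div_one_sub_rpow_hasFPowerSeriesOnBall_zero (1 / 2)`.
theorem Ring.choose_half_add_sub_one (n : ℕ) :
    Ring.choose ((2 : ℝ)⁻¹ + n - 1) n = Nat.centralBinom n / 4 ^ n := by
  rw [← Ring.multichoose_eq, ← mul_right_inj' (Nat.cast_ne_zero.2 n.factorial_ne_zero),
    ← nsmul_eq_mul, Ring.factorial_nsmul_multichoose_eq_ascPochhammer,
    Polynomial.ascPochhammer_smeval_eq_eval, inv_eq_one_div, ascPochhammer_eval_half, mul_div_assoc]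

theorem hasSum_centralBinom_div_four_pow_mul_pow {x : ℝ} (hx : |x| < 1) :
    HasSum (fun n => (Nat.centralBinom n : ℝ) / 4 ^ n * x ^ n) (√(1 - x))⁻¹ := by
  have := (Real.one_div_one_sub_rpow_hasFPowerSeriesOnBall_zero (1 / 2)).hasSum
    (y := x) (by simpa [enorm_eq_nnnorm, ← NNReal.coe_lt_coe] using hx)
  simpa [FormalMultilinearSeries.ofScalars_apply_eq, Ring.choose_half_add_sub_one,
    Real.sqrt_eq_rpow, mul_comm] using this

theorem hasSum_centralBinom_succ_div_four_pow_mul_pow {x : ℝ} (hx : |x| < 1) :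
    HasSum (fun n => (Nat.centralBinom (n + 1) : ℝ) / 4 ^ (n + 1) * x ^ n)
      (√(1 - x) * (1 + √(1 - x)))⁻¹ := by
  rcases eq_or_ne x 0 with rfl | hx0
  · convert hasSum_single (f := fun n => (Nat.centralBinom (n + 1) : ℝ) / 4 ^ (n + 1) * 0 ^ n) 0
      (fun n hn => by simp [hn]) using 1
    norm_num [Nat.centralBinom, Nat.choose]
  have hs : 0 < √(1 - x) := Real.sqrt_pos.2 (by linarith [le_abs_self x])
  have hsq : √(1 - x) ^ 2 = 1 - x := Real.sq_sqrt (by linarith [le_abs_self x])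
  have htail :=
    ((hasSum_nat_add_iff' 1).2 (hasSum_centralBinom_div_four_pow_mul_pow hx)).mul_left x⁻¹
  simp only [Finset.sum_range_one, Nat.centralBinom_zero, Nat.cast_one, pow_zero, div_one,
    mul_one] at htail
  -- `x = (1 - s)(1 + s)` with `s = √(1 - x)`
  have hval : x⁻¹ * ((√(1 - x))⁻¹ - 1) = (√(1 - x) * (1 + √(1 - x)))⁻¹ := by
    have : 1 - √(1 - x) ≠ 0 := fun h => hx0 (by nlinarith)
    field_simp
    linear_combination -hsq
  rw [hval] at htail
  exact htail.congr_fun fun n => by field_simp; ring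

theorem abs_centralBinom_succ_div_four_pow_div_two_le_one (n : ℕ) :
    |(Nat.centralBinom (n + 1) : ℝ) / 4 ^ (n + 1) / 2| ≤ 1 := by
  have h : (Nat.centralBinom (n + 1) : ℝ) / 4 ^ (n + 1) ≤ 1 :=
    div_le_one_of_le₀ (mod_cast Nat.centralBinom_le_four_pow _) (by positivity)
  rw [abs_of_nonneg (by positivity)]
  linarith

theorem summable_mul_pow_succ_div_succ {b : ℕ → ℝ} {C : ℝ} (hb : ∀ n, |b n| ≤ C)
    {x : ℝ} (hx : |x| < 1) : Summable fun n : ℕ => b n * x ^ (n + 1) / (n + 1) := by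
  refine Summable.of_norm_bounded ((summable_geometric_of_lt_one (abs_nonneg x) hx).mul_left C)
    fun n => ?_
  have hC : 0 ≤ C := (abs_nonneg _).trans (hb 0)
  rw [Real.norm_eq_abs, abs_div, abs_mul, abs_pow, abs_of_pos (by positivity : (0:ℝ) < n + 1)]
  calc |b n| * |x| ^ (n + 1) / (n + 1) ≤ |b n| * |x| ^ (n + 1) :=
        div_le_self (by positivity) (by linarith [n.cast_nonneg (α := ℝ)])
    _ ≤ C * |x| ^ n := mul_le_mul (hb n) (pow_le_pow_of_le_one (abs_nonneg x) hx.le n.le_succ)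
        (by positivity) hC

theorem hasDerivAt_tsum_mul_pow_succ_div_succ {b : ℕ → ℝ} {C : ℝ} (hb : ∀ n, |b n| ≤ C)
    {y : ℝ} (hy : |y| < 1) :
    HasDerivAt (fun z => ∑' n : ℕ, b n * z ^ (n + 1) / (n + 1))
      (∑' n : ℕ, b n * y ^ n) y := by
  obtain ⟨r, hyr, hr⟩ := exists_between hy
  have hr0 : 0 < r := (abs_nonneg y).trans_lt hyr
  refine hasDerivAt_tsum_of_isPreconnected (t := Set.Ioo (-r) r)
    (g := fun n z => b n * z ^ (n + 1) / (n + 1)) (g' := fun n z => b n * z ^ n)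
    ((summable_geometric_of_lt_one hr0.le hr).mul_left C) isOpen_Ioo isPreconnected_Ioo
    (fun n z _ => ?_) (fun n z hz => ?_) (y₀ := 0) ⟨neg_neg_of_pos hr0, hr0⟩
    (by simp [zero_pow]) (abs_lt.1 hyr)
  · refine (((hasDerivAt_pow (n + 1) z).const_mul (b n)).div_const ((n : ℝ) + 1)).congr_deriv ?_
    push_cast
    field_simp
  · rw [Real.norm_eq_abs, abs_mul, abs_pow]
    exact mul_le_mul (hb n) (pow_le_pow_left₀ (abs_nonneg z) (abs_lt.2 hz).le n) (by positivity)
      ((abs_nonneg _).trans (hb n))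

theorem hasDerivAt_neg_log_one_add_sqrt_one_sub_div_two {x : ℝ} (hx : x < 1) :
    HasDerivAt (fun z => -log ((1 + √(1 - z)) / 2))
      ((√(1 - x) * (1 + √(1 - x)))⁻¹ / 2) x := by
  have hs : 0 < √(1 - x) := Real.sqrt_pos.2 (by linarith)
  have hsqrt : HasDerivAt (fun z => √(1 - z)) (-1 / (2 * √(1 - x))) x := by
    convert ((hasDerivAt_id' x).const_sub 1).sqrt (by linarith) using 1
  refine (((hsqrt.const_add 1).div_const 2).log (by positivity)).fun_neg.congr_deriv ?_
  field_simp

theorem tsum_centralBinom_succ_div_mul_pow_succ {x : ℝ} (hx : |x| < 1) :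
    ∑' n : ℕ, (Nat.centralBinom (n + 1) : ℝ) / 4 ^ (n + 1) / 2 * x ^ (n + 1) / (n + 1)
      = -log ((1 + √(1 - x)) / 2) := by
  set F : ℝ → ℝ := fun z =>
    ∑' n : ℕ, (Nat.centralBinom (n + 1) : ℝ) / 4 ^ (n + 1) / 2 * z ^ (n + 1) / (n + 1)
  set G : ℝ → ℝ := fun z => -log ((1 + √(1 - z)) / 2)
  have hderiv : ∀ y ∈ Set.Ioo (-1 : ℝ) 1,
      HasDerivAt F ((√(1 - y) * (1 + √(1 - y)))⁻¹ / 2) y ∧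
      HasDerivAt G ((√(1 - y) * (1 + √(1 - y)))⁻¹ / 2) y := fun y hy => by
    have hy' : |y| < 1 := abs_lt.2 hy
    refine ⟨(hasDerivAt_tsum_mul_pow_succ_div_succ
      abs_centralBinom_succ_div_four_pow_div_two_le_one hy').congr_deriv ?_,
      hasDerivAt_neg_log_one_add_sqrt_one_sub_div_two hy.2⟩
    rw [← ((hasSum_centralBinom_succ_div_four_pow_mul_pow hy').div_const 2).tsum_eq]
    exact tsum_congr fun n => by ring
  exact IsOpen.eqOn_of_deriv_eq isOpen_Ioo isPreconnected_Ioo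
    (fun y hy => (hderiv y hy).1.differentiableAt.differentiableWithinAt)
    (fun y hy => (hderiv y hy).2.differentiableAt.differentiableWithinAt)
    (fun y hy => (hderiv y hy).1.deriv.trans (hderiv y hy).2.deriv.symm)
    (x := 0) (by norm_num) (by simp [F, G]) (abs_lt.1 hx)

theorem hasSum_centralBinom_div_four_pow_div_mul_pow {x : ℝ} (hx : |x| < 1) :
    HasSum (fun n : ℕ => (Nat.centralBinom n : ℝ) / 4 ^ n / (2 * n) * x ^ n)
      (-log ((1 + √(1 - x)) / 2)) := by
  have hsum := (summable_mul_pow_succ_div_succ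
    abs_centralBinom_succ_div_four_pow_div_two_le_one hx).hasSum
  rw [tsum_centralBinom_succ_div_mul_pow_succ hx] at hsum
  rw [← hasSum_nat_add_iff' 1]
  simp only [Finset.sum_range_one, Nat.cast_zero, mul_zero, div_zero, zero_mul, sub_zero]
  exact hsum.congr_fun fun n => by push_cast; field_simp

/-- The `j = 0` term is `(1/(2·0)) · C(0,0) · (α/2)^0 = 0` in Lean's conventions
(division by zero equals zero), so the sum over `ℕ` equals the sum from `j = 1`. -/
theorem logFSK_central_binomial_series (α : ℝ) (h0 : 0 < α) (h1 : α < 1) :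
    HasSum (fun j : ℕ => (1 / (2 * (j : ℝ))) * (Nat.choose (2 * j) j : ℝ) * (α / 2) ^ (2 * j))
      (-Real.log ((1 + Real.sqrt (1 - α ^ 2)) / 2)) ∧
    -Real.log ((1 + Real.sqrt (1 - α ^ 2)) / 2) =
      Real.log 2 - Real.log (1 + Real.sqrt (1 - α ^ 2)) := by
  have hα : |α ^ 2| < 1 := by
    rw [abs_of_nonneg (sq_nonneg α)]
    exact pow_lt_one₀ h0.le h1 two_ne_zero
  refine ⟨(hasSum_centralBinom_div_four_pow_div_mul_pow hα).congr_fun fun j => ?_, ?_⟩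
  · rw [Nat.centralBinom_eq_two_mul_choose, pow_mul, div_pow, div_pow]
    norm_num
    ring
  · rw [log_div (by positivity) two_ne_zero]
    ring
end

section
/- Let r be a real number with |r| < 1 and set a = 2r/(1 + r²), so |a| ≤ 1 and 1 + a·cos θ > 0 for all θ (when |r| < 1). Then for every real θ the series ∑_{i=1}^{∞} ((−1)^{i+1}/i) · r^i · cos(i·θ) converges and log(1 + (2r/(1+r²))·cos θ) = −log(1 + r²) + 2·∑_{i=1}^{∞} ((−1)^{i+1}/i) · r^i · cos(i·θ). -/
/-! With `z = r e^{iθ}` the real part of the Taylor series of `log (1 + z)` is the cosine series,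
and its sum is `log ‖1 + z‖ = log (1 + 2 r cos θ + r²) / 2`. Factoring `1 + r²` out of
`1 + 2 r cos θ + r²` gives the stated form. -/

open Real

namespace Complex

theorem hasSum_re_taylorSeries_log {z : ℂ} (hz : ‖z‖ < 1) :
    HasSum (fun n : ℕ => (-1 : ℝ) ^ (n + 1) / n * (z ^ n).re) (Real.log ‖1 + z‖) := by
  have h := (hasSum_taylorSeries_log hz).mapL reCLM
  rw [reCLM_apply, log_re] at h
  convert h using 2 with n
  rw [reCLM_apply, mul_div_right_comm, ← re_ofReal_mul]
  push_cast
  rfl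

theorem re_ofReal_mul_exp_mul_I_pow (r θ : ℝ) (n : ℕ) :
    ((r * exp (θ * I)) ^ n).re = r ^ n * Real.cos (n * θ) := by
  rw [mul_pow, ← exp_nat_mul, ← ofReal_pow, ← mul_assoc, ← ofReal_natCast, ← ofReal_mul,
    re_ofReal_mul, exp_ofReal_mul_I_re]

theorem normSq_one_add_ofReal_mul_exp_mul_I (r θ : ℝ) :
    normSq (1 + r * exp (θ * I)) = 1 + 2 * r * Real.cos θ + r ^ 2 := by
  rw [exp_mul_I, ← ofReal_cos, ← ofReal_sin, normSq_apply]
  simp only [add_re, add_im, one_re, one_im, mul_re, mul_im, ofReal_re, ofReal_im, I_re, I_im]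
  linear_combination r ^ 2 * Real.sin_sq_add_cos_sq θ

end Complex

theorem Real.one_add_two_mul_mul_cos_add_sq_pos {r : ℝ} (hr : |r| ≠ 1) (θ : ℝ) :
    0 < 1 + 2 * r * Real.cos θ + r ^ 2 := by
  have hcos : -|r| ≤ r * Real.cos θ := by
    have : |r * Real.cos θ| ≤ |r| := by
      rw [abs_mul]
      exact mul_le_of_le_one_right (abs_nonneg r) (Real.abs_cos_le_one θ)
    linarith [neg_abs_le (r * Real.cos θ)]
  have hsq : 0 < (1 - |r|) ^ 2 := by
    have : 1 - |r| ≠ 0 := sub_ne_zero.mpr hr.symm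
    positivity
  nlinarith [sq_abs r]

theorem Real.hasSum_pow_mul_cos_log {r : ℝ} (hr : |r| < 1) (θ : ℝ) :
    HasSum (fun n : ℕ => (-1 : ℝ) ^ (n + 1) / n * r ^ n * Real.cos (n * θ))
      (Real.log (1 + 2 * r * Real.cos θ + r ^ 2) / 2) := by
  set z : ℂ := r * Complex.exp (θ * Complex.I)
  have hz : ‖z‖ < 1 := by simpa [z, Complex.norm_exp] using hr
  have hlog : Real.log ‖1 + z‖ = Real.log (1 + 2 * r * Real.cos θ + r ^ 2) / 2 := by
    rw [← Complex.normSq_one_add_ofReal_mul_exp_mul_I, Complex.normSq_eq_norm_sq, Real.log_pow]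
    ring
  simpa only [mul_assoc, z, Complex.re_ofReal_mul_exp_mul_I_pow, hlog]
    using Complex.hasSum_re_taylorSeries_log hz

/-- The `i = 0` term is `((-1)^1 / 0) · r^0 · cos 0 = 0` in Lean's conventions
(division by zero equals zero), so the sum over `ℕ` equals the sum from `i = 1`. -/
theorem logFSK_fourier_series (r : ℝ) (hr : |r| < 1) (θ : ℝ) :
    Summable (fun i : ℕ => ((-1 : ℝ) ^ (i + 1) / (i : ℝ)) * r ^ i * Real.cos ((i : ℝ) * θ)) ∧
    Real.log (1 + (2 * r / (1 + r ^ 2)) * Real.cos θ) =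
      -Real.log (1 + r ^ 2) +
        2 * ∑' i : ℕ, ((-1 : ℝ) ^ (i + 1) / (i : ℝ)) * r ^ i * Real.cos ((i : ℝ) * θ) := by
  have hsum := Real.hasSum_pow_mul_cos_log hr θ
  refine ⟨hsum.summable, ?_⟩
  have hnum := Real.one_add_two_mul_mul_cos_add_sq_pos hr.ne θ
  have harg : 1 + (2 * r / (1 + r ^ 2)) * Real.cos θ =
      (1 + 2 * r * Real.cos θ + r ^ 2) / (1 + r ^ 2) := by
    field_simp
    ring
  rw [harg, Real.log_div hnum.ne' (by positivity), hsum.tsum_eq]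
  ring
end
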